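/- Let φ be a finite potent endomorphism of a k-vector space V and let W be an admissible subspace for φ. Then det((1+φ)|_W) ≠ 0 if and only if the endomorphism 1+φ : V → V is bijective. Equivalently, Det^k_V(1+φ) ≠ 0 if and only if 1+φ is invertible. -/

import Mathlib

/-!
A vector with `(1 + φ) x = 0` is fixed by `-φ`, so `x = (-φ)^n x` lies in `φ^n(V) ⊆ W`; and the
geometric series `(1 + φ) ∑_{i<n} (-φ)^i = 1 - (-φ)^n` gives `V = (1 + φ)(V) + φ^n(V)`.
Hence `1 + φ` is bijective on `V` as soon as it is injective on the finite-dimensional space `W`,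
which is what `det((1 + φ)|_W) ≠ 0` says.
-/

namespace Module.End

variable {R V : Type*} [Ring R] [AddCommGroup V] [Module R V]

theorem ker_one_add_le_range_pow (φ : Module.End R V) (n : ℕ) :
    LinearMap.ker (1 + φ) ≤ LinearMap.range (φ ^ n) := by
  intro x hx
  have hfix : (-φ) x = x := (eq_neg_of_add_eq_zero_left hx).symm
  have hpow : ((-φ) ^ n) x = x := by
    rw [pow_apply]
    exact Function.iterate_fixed hfix n
  rw [← hpow, neg_pow', mul_apply]
  exact LinearMap.mem_range_self _ _

theorem range_one_add_sup_range_pow (φ : Module.End R V) (n : ℕ) :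
    LinearMap.range (1 + φ) ⊔ LinearMap.range (φ ^ n) = ⊤ := by
  have hgeom : (1 + φ) * ∑ i ∈ Finset.range n, (-φ) ^ i = 1 - (-φ) ^ n := by
    rw [← mul_neg_geom_sum, sub_neg_eq_add]
  refine Submodule.eq_top_iff'.mpr fun y => Submodule.mem_sup.mpr
    ⟨_, LinearMap.mem_range_self _ ((∑ i ∈ Finset.range n, (-φ) ^ i) y),
      _, LinearMap.mem_range_self (φ ^ n) (((-1) ^ n : Module.End R V) y), ?_⟩
  rw [← mul_apply, hgeom, ← mul_apply, ← neg_pow', LinearMap.sub_apply, sub_add_cancel, one_apply]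

end Module.End

theorem LinearMap.bijective_of_injective_restrict {K V : Type*} [DivisionRing K] [AddCommGroup V]
    [Module K V] {g : V →ₗ[K] V} {W : Submodule K V} [FiniteDimensional K W]
    (hW : ∀ x ∈ W, g x ∈ W) (hinj : Function.Injective (g.restrict hW))
    (hker : LinearMap.ker g ≤ W) (hrange : LinearMap.range g ⊔ W = ⊤) :
    Function.Bijective g := by
  have hW_le : W ≤ LinearMap.range g := fun w hw => by
    obtain ⟨v, hv⟩ := LinearMap.injective_iff_surjective.mp hinj ⟨w, hw⟩
    exact ⟨v, congrArg Subtype.val hv⟩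
  refine ⟨LinearMap.ker_eq_bot.mp ?_, LinearMap.range_eq_top.mp ?_⟩
  · exact ((LinearMap.injective_restrict_iff hW).mp hinj).symm.eq_bot_of_le hker
  · rwa [← sup_eq_left.mpr hW_le]

theorem det_one_add_restrict_ne_zero_iff_bijective
    {k V : Type*} [Field k] [AddCommGroup V] [Module k V]
    (φ : V →ₗ[k] V)
    (W : Submodule k V) (hWfin : FiniteDimensional k W)
    (hWinv : ∀ x ∈ W, φ x ∈ W)
    (n : ℕ) (hr : LinearMap.range (φ ^ n) ≤ W) :
    LinearMap.det ((1 + φ).restrict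
        (fun x hx => W.add_mem hx (hWinv x hx) : ∀ x ∈ W, (1 + φ) x ∈ W)) ≠ 0
      ↔ Function.Bijective ⇑(1 + φ) := by
  rw [ne_eq, LinearMap.det_eq_zero_iff_ker_ne_bot, not_not, LinearMap.ker_eq_bot]
  refine ⟨fun hinj => LinearMap.bijective_of_injective_restrict _ hinj
    ((Module.End.ker_one_add_le_range_pow φ n).trans hr) (top_unique ?_), fun hbij => ?_⟩
  · rw [← Module.End.range_one_add_sup_range_pow φ n]
    exact sup_le_sup_left hr _
  · rw [LinearMap.injective_restrict_iff, LinearMap.ker_eq_bot.mpr hbij.injective]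
    exact disjoint_bot_right
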